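/- arXiv:1711.01864 — 7 statements merged into one kernel-verified Lean document; each statement's English description precedes it below -/
import Mathlib

section
/- If a and b are nonnegative integers and c is a nonzero integer such that √a − √b = c, then both √a and √b are integers (i.e., a and b are perfect squares). -/
theorem stmt_0 (a b c : ℤ) (ha : 0 ≤ a) (hb : 0 ≤ b) (hc : c ≠ 0)
    (h : Real.sqrt a - Real.sqrt b = c) :
    (∃ m : ℤ, a = m ^ 2) ∧ (∃ n : ℤ, b = n ^ 2) := by
  have hsa : Real.sqrt a ^ 2 = (a : ℝ) := Real.sq_sqrt (by exact_mod_cast ha)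
  have hsb : Real.sqrt b ^ 2 = (b : ℝ) := Real.sq_sqrt (by exact_mod_cast hb)
  have hc' : (c : ℝ) ≠ 0 := Int.cast_ne_zero.mpr hc
  have heq : Real.sqrt a = c + Real.sqrt b := by linarith
  have key : (a : ℝ) = c ^ 2 + 2 * c * Real.sqrt b + b := by
    have : (a : ℝ) = c ^ 2 + 2 * c * Real.sqrt b + Real.sqrt b ^ 2 := by
      rw [← hsa, heq]; ring
    linarith [hsb]
  have hb' : Real.sqrt b = ((a : ℝ) - b - c ^ 2) / (2 * c) := by
    field_simp
    linarith
  set q : ℚ := ((a : ℚ) - b - c ^ 2) / (2 * c) with hqdef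
  have hq : Real.sqrt b = (q : ℝ) := by rw [hb', hqdef]; push_cast; ring
  have hnb : ¬ Irrational (Real.sqrt b) := by rw [hq]; exact Rat.not_irrational q
  have hqa : Real.sqrt a = ((c + q : ℚ) : ℝ) := by rw [heq, hq]; push_cast; ring
  have hna : ¬ Irrational (Real.sqrt a) := by rw [hqa]; exact Rat.not_irrational _
  have hsqb : IsSquare b := by
    by_contra hs; exact hnb ((irrational_sqrt_intCast_iff_of_nonneg hb).mpr hs)
  have hsqa : IsSquare a := by
    by_contra hs; exact hna ((irrational_sqrt_intCast_iff_of_nonneg ha).mpr hs)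
  obtain ⟨m, hm⟩ := hsqa
  obtain ⟨n, hn⟩ := hsqb
  exact ⟨⟨m, by rw [hm]; ring⟩, ⟨n, by rw [hn]; ring⟩⟩
end

section
/- Suppose i ≥ 1 and 0 ≤ j ≤ i are integers with (i,j) ≠ (1,1), and set r := i + 1/2 − √((i + 1/2)² − 2j). Define y := i(i+3)/2 − j + 1 and k := i(i+1)/2 − j − 1. Then y and k are nonnegative integers, r ∈ [0,1], and r = y − k − 3/2 − √(2k + 9/4). -/
theorem stmt_3 (i j y k : ℤ) (hi : 1 ≤ i) (hj0 : 0 ≤ j) (hji : j ≤ i)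
    (hne : (i, j) ≠ (1, 1))
    (hy : 2 * y = i * (i + 3) - 2 * j + 2)
    (hk : 2 * k = i * (i + 1) - 2 * j - 2) :
    0 ≤ y ∧ 0 ≤ k ∧
    (i + 1 / 2 - Real.sqrt ((i + 1 / 2) ^ 2 - 2 * j) : ℝ) ∈ Set.Icc (0 : ℝ) 1 ∧
    (i + 1 / 2 - Real.sqrt ((i + 1 / 2) ^ 2 - 2 * j) : ℝ)
      = y - k - 3 / 2 - Real.sqrt (2 * k + 9 / 4) := by
  have hk0 : 0 ≤ k := by
    rcases eq_or_lt_of_le hi with h1 | h2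
    · have hj1 : j ≠ 1 := by
        intro hj; exact hne (by rw [← h1, hj])
      have : j = 0 := by omega
      nlinarith
    · nlinarith
  have hy0 : 0 ≤ y := by nlinarith
  -- real facts
  have hiR : (1 : ℝ) ≤ (i : ℝ) := by exact_mod_cast hi
  have hjR : (0 : ℝ) ≤ (j : ℝ) := by exact_mod_cast hj0
  have hjiR : (j : ℝ) ≤ (i : ℝ) := by exact_mod_cast hji
  set A : ℝ := ((i : ℝ) + 1 / 2) ^ 2 - 2 * j with hA
  have hA0 : 0 ≤ A := by rw [hA]; nlinarith [sq_nonneg ((i : ℝ) - 1/2)]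
  have hupper : Real.sqrt A ≤ (i : ℝ) + 1 / 2 := by
    rw [show (i : ℝ) + 1 / 2 = Real.sqrt (((i:ℝ) + 1/2)^2) by
      rw [Real.sqrt_sq (by linarith)]]
    exact Real.sqrt_le_sqrt (by rw [hA]; nlinarith)
  have hlower : (i : ℝ) - 1 / 2 ≤ Real.sqrt A := by
    rw [show (i : ℝ) - 1 / 2 = Real.sqrt (((i:ℝ) - 1/2)^2) by
      rw [Real.sqrt_sq (by linarith)]]
    exact Real.sqrt_le_sqrt (by rw [hA]; nlinarith)
  refine ⟨hy0, hk0, ⟨by linarith, by linarith⟩, ?_⟩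
  have hkR : 2 * (k : ℝ) = i * (i + 1) - 2 * j - 2 := by exact_mod_cast hk
  have hyR : 2 * (y : ℝ) = i * (i + 3) - 2 * j + 2 := by exact_mod_cast hy
  have h1 : (2 * (k : ℝ) + 9 / 4) = A := by rw [hA]; ring_nf; linarith
  have h2 : (y : ℝ) - k - 3 / 2 = (i : ℝ) + 1 / 2 := by linarith
  rw [h1, h2]
end

section
/- Let y and k be nonnegative integers such that r := y − k − 3/2 − √(2k + 9/4) lies in [0,1]. Then with i := y − k − 2 and j := y(y−3)/2 + k(k+1)/2 − yk, one has i ≥ 1, 0 ≤ j ≤ i, and r = i + 1/2 − √((i + 1/2)² − 2j). -/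
theorem stmt_4 (y k i j : ℤ) (hy : 0 ≤ y) (hk : 0 ≤ k)
    (hr0 : (0 : ℝ) ≤ y - k - 3 / 2 - Real.sqrt (2 * k + 9 / 4))
    (hr1 : (y - k - 3 / 2 - Real.sqrt (2 * k + 9 / 4) : ℝ) ≤ 1)
    (hi : i = y - k - 2)
    (hj : 2 * j = y * (y - 3) + k * (k + 1) - 2 * y * k) :
    1 ≤ i ∧ 0 ≤ j ∧ j ≤ i ∧
    (y - k - 3 / 2 - Real.sqrt (2 * k + 9 / 4) : ℝ)
      = i + 1 / 2 - Real.sqrt ((i + 1 / 2) ^ 2 - 2 * j) := by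
  set s : ℝ := Real.sqrt (2 * k + 9 / 4) with hs
  have hkR : (0 : ℝ) ≤ (k : ℝ) := by exact_mod_cast hk
  have hs0 : 0 ≤ s := Real.sqrt_nonneg _
  have hs2 : s ^ 2 = 2 * k + 9 / 4 := by
    rw [hs, Real.sq_sqrt]; linarith
  have hiR : (i : ℝ) + 1 / 2 = (y : ℝ) - k - 3 / 2 := by
    have : (i : ℝ) = (y : ℝ) - k - 2 := by exact_mod_cast hi
    linarith
  have hjR : (2 : ℝ) * j = ((i : ℝ) + 1 / 2) ^ 2 - s ^ 2 := by
    have h2 : (2 : ℝ) * j = (y : ℝ) * (y - 3) + k * (k + 1) - 2 * y * k := by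
      exact_mod_cast hj
    rw [hs2, hiR]; ring_nf; ring_nf at h2; linarith
  have hA : s ≤ (i : ℝ) + 1 / 2 := by rw [hiR]; linarith
  have hB : (i : ℝ) + 1 / 2 ≤ s + 1 := by rw [hiR]; linarith
  have hs32 : (3 : ℝ) / 2 ≤ s := by nlinarith
  have hi1 : 1 ≤ i := by
    have : (1 : ℝ) ≤ (i : ℝ) := by linarith
    exact_mod_cast this
  have hj0 : 0 ≤ j := by
    have : (0 : ℝ) ≤ (j : ℝ) := by nlinarith
    exact_mod_cast this
  have hji : j ≤ i := by
    have h : (2 : ℝ) * j ≤ 2 * i + 1 := by nlinarith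
    have h' : 2 * j ≤ 2 * i + 1 := by exact_mod_cast h
    omega
  refine ⟨hi1, hj0, hji, ?_⟩
  have harg : ((i : ℝ) + 1 / 2) ^ 2 - 2 * j = 2 * k + 9 / 4 := by
    rw [hjR, hs2]; ring
  rw [harg, ← hs, hiR]
end

section
/- Let x be an odd nonnegative integer and suppose there exist integers i ≥ 1 and 0 ≤ j ≤ i and an integer y such that y = x/2 + √(x + 9/4) + 3/2 + (i + 1/2 − √((i + 1/2)² − 2j)). Then a contradiction follows; that is, no such odd x exists (x must be even). -/
theorem stmt_5 (x y i j : ℤ) (hx : 0 ≤ x) (hodd : Odd x)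
    (hi : 1 ≤ i) (hj0 : 0 ≤ j) (hji : j ≤ i)
    (hy : (y : ℝ) = x / 2 + Real.sqrt (x + 9 / 4) + 3 / 2
      + (i + 1 / 2 - Real.sqrt ((i + 1 / 2) ^ 2 - 2 * j))) :
    False := by
  obtain ⟨t, ht⟩ := hodd
  have hiev := Int.even_mul_succ_self i
  obtain ⟨u, hu⟩ := hiev
  set B : ℝ := ((4 * x + 9 : ℤ) : ℝ) with hBdef
  set A : ℝ := (((2 * i + 1) ^ 2 - 8 * j : ℤ) : ℝ) with hAdef
  have hAZ : (0 : ℤ) ≤ (2 * i + 1) ^ 2 - 8 * j := by nlinarith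
  have hA0 : (0 : ℝ) ≤ A := by rw [hAdef]; exact_mod_cast hAZ
  have hB0 : (0 : ℝ) ≤ B := by
    have h : (0:ℤ) ≤ 4 * x + 9 := by linarith
    rw [hBdef]; exact_mod_cast h
  have h4 : Real.sqrt 4 = 2 := by
    rw [show (4:ℝ) = 2 ^ 2 by norm_num, Real.sqrt_sq (by norm_num)]
  have h1 : Real.sqrt ((x : ℝ) + 9 / 4) = Real.sqrt B / 2 := by
    rw [show ((x:ℝ) + 9/4) = B / 4 by push_cast [hBdef]; ring,
      Real.sqrt_div hB0, h4]
  have h2 : Real.sqrt (((i:ℝ) + 1/2) ^ 2 - 2 * j) = Real.sqrt A / 2 := by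
    rw [show (((i:ℝ) + 1/2) ^ 2 - 2 * j) = A / 4 by push_cast [hAdef]; ring,
      Real.sqrt_div hA0, h4]
  rw [h1, h2] at hy
  set m : ℤ := 2 * y - x - 2 * i - 4 with hm
  have key : Real.sqrt B = Real.sqrt A + (m : ℝ) := by
    push_cast [hm]
    linarith [hy]
  rcases eq_or_ne m 0 with h0 | h0
  · rw [h0] at key
    push_cast at key
    rw [add_zero, Real.sqrt_inj hB0 hA0] at key
    rw [hBdef, hAdef] at key
    have : (4 * x + 9 : ℤ) = (2 * i + 1) ^ 2 - 8 * j := by exact_mod_cast key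
    have hexp : (2 * i + 1) ^ 2 = 4 * (i * (i + 1)) + 1 := by ring
    rw [hexp, hu] at this
    omega
  · -- sqrt A is rational
    have hsq : Real.sqrt A * Real.sqrt A = A := Real.mul_self_sqrt hA0
    have hBsq : Real.sqrt B * Real.sqrt B = B := Real.mul_self_sqrt hB0
    have hexpand : B = A + 2 * (m:ℝ) * Real.sqrt A + (m:ℝ)^2 := by
      calc B = Real.sqrt B * Real.sqrt B := hBsq.symm
      _ = (Real.sqrt A + (m:ℝ)) * (Real.sqrt A + (m:ℝ)) := by rw [key]
      _ = Real.sqrt A * Real.sqrt A + 2 * (m:ℝ) * Real.sqrt A + (m:ℝ)^2 := by ring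
      _ = A + 2 * (m:ℝ) * Real.sqrt A + (m:ℝ)^2 := by rw [hsq]
    have hm0 : (m : ℝ) ≠ 0 := Int.cast_ne_zero.mpr h0
    have hlin : Real.sqrt A = (B - A - (m:ℝ)^2) / (2 * (m:ℝ)) := by
      field_simp
      linarith [hexpand]
    set q : ℚ := ((((4*x+9 : ℤ) : ℚ) - (((2*i+1)^2 - 8*j : ℤ):ℚ) - (m:ℚ)^2) / (2 * (m:ℚ))) with hq
    have hrat : ¬ Irrational (Real.sqrt A) := by
      have hqr : ((q : ℚ) : ℝ) = (B - A - (m:ℝ)^2) / (2 * (m:ℝ)) := by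
        rw [hq, hBdef, hAdef]; push_cast; ring
      rw [hlin, ← hqr]
      exact Rat.not_irrational _
    have hint : ∃ s : ℤ, Real.sqrt A = s := by
      by_contra hc
      exact hrat (irrational_nrt_of_notint_nrt 2 ((2*i+1)^2 - 8*j)
        (by rw [sq, hsq, hAdef]) hc two_pos)
    obtain ⟨s, hs⟩ := hint
    have hs0 : (0:ℝ) ≤ (s:ℝ) := hs ▸ Real.sqrt_nonneg A
    have hB_eq : B = ((s + m : ℤ) : ℝ) ^ 2 := by
      rw [← hBsq, key, hs]
      push_cast; ring
    have hBZ : (4 * x + 9 : ℤ) = (s + m) ^ 2 := by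
      rw [hBdef] at hB_eq; exact_mod_cast hB_eq
    -- s + m is odd, so its square is 1 mod 8
    have hodd2 : Odd (s + m) := by
      rcases Int.even_or_odd (s + m) with he | ho
      · exfalso
        obtain ⟨k, hk⟩ := he
        have h2 : 4 * x + 9 = 4 * (k * k) := by rw [hBZ, hk]; ring
        obtain ⟨w, hw⟩ : ∃ w, k * k = w := ⟨_, rfl⟩
        rw [hw] at h2
        omega
      · exact ho
    obtain ⟨k, hk⟩ := hodd2
    rw [hk] at hBZ
    have hexp : (2 * k + 1) ^ 2 = 4 * (k * (k + 1)) + 1 := by ring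
    obtain ⟨v, hv⟩ := Int.even_mul_succ_self k
    rw [hexp, hv] at hBZ
    omega
end

section
/- For integers x, y ≥ 0, the condition y ≥ x/2 + ⌈√(x + 9/4) + 1/2⌉ + 1 holds if and only if either y ≥ x/2 + √(x + 9/4) + 2, or y = x/2 + √(x + 9/4) + 3/2 + r for some r of the form r = i + 1/2 − √((i + 1/2)² − 2j) with integers i ≥ 1 and 0 ≤ j ≤ i. -/
set_option maxHeartbeats 1000000 in
theorem stmt_6 (x y : ℤ) (hx : 0 ≤ x) (hy : 0 ≤ y) :
    ((y : ℝ) ≥ x / 2 + (⌈Real.sqrt (x + 9 / 4) + 1 / 2⌉ : ℤ) + 1) ↔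
      ((y : ℝ) ≥ x / 2 + Real.sqrt (x + 9 / 4) + 2 ∨
        ∃ i j : ℤ, 1 ≤ i ∧ 0 ≤ j ∧ j ≤ i ∧
          (y : ℝ) = x / 2 + Real.sqrt (x + 9 / 4) + 3 / 2
            + (i + 1 / 2 - Real.sqrt ((i + 1 / 2) ^ 2 - 2 * j))) := by
  have hx0 : (0:ℝ) ≤ (x:ℝ) := by exact_mod_cast hx
  have ha0 : (0:ℝ) ≤ 4 * (x:ℝ) + 9 := by linarith
  set σ : ℝ := Real.sqrt (4 * (x:ℝ) + 9) with hσdef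
  have hσ0 : 0 ≤ σ := Real.sqrt_nonneg _
  have hσ2 : σ ^ 2 = 4 * (x:ℝ) + 9 := Real.sq_sqrt ha0
  have hσ3 : 3 ≤ σ := by nlinarith
  have hs : Real.sqrt ((x:ℝ) + 9 / 4) = σ / 2 := by
    have h1 : ((x:ℝ) + 9 / 4) = (σ / 2) ^ 2 := by rw [div_pow, hσ2]; ring
    rw [h1, Real.sqrt_sq (by positivity)]
  rw [hs]
  set c : ℤ := ⌈σ / 2 + 1 / 2⌉ with hcdef
  set k : ℤ := ⌈σ⌉ with hkdef
  have hkσ : σ ≤ (k:ℝ) := Int.le_ceil σ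
  have hck : σ / 2 + 1 / 2 ≤ (c:ℝ) := Int.le_ceil _
  have hc_lt : (c:ℝ) < σ / 2 + 1 / 2 + 1 := Int.ceil_lt_add_one _
  have hA : 2 * c ≤ k + 2 := by
    have h1 : ((2 * c : ℤ) : ℝ) < ((k + 3 : ℤ):ℝ) := by push_cast; linarith
    have h2 : (2 * c : ℤ) < k + 3 := by exact_mod_cast h1
    omega
  have hB : k ≤ 2 * c - 1 := by
    exact Int.ceil_le.mpr (by push_cast; linarith)
  constructor
  · -- forward direction
    intro h
    have hm : 2 * c - 1 ≤ 2 * y - x - 3 := by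
      have h1 : ((x + 2 * c + 2 : ℤ) : ℝ) ≤ ((2 * y : ℤ) : ℝ) := by push_cast; linarith
      have h2 : (x + 2 * c + 2 : ℤ) ≤ 2 * y := by exact_mod_cast h1
      omega
    by_cases hcase : k + 1 ≤ 2 * y - x - 3
    · left
      have h1 : ((k + 1 + x + 3 : ℤ) : ℝ) ≤ ((2 * y : ℤ) : ℝ) := by
        exact_mod_cast (by omega : k + 1 + x + 3 ≤ 2 * y)
      push_cast at h1
      linarith
    · have hmk : 2 * y - x - 3 = k := by omega
      rcases eq_or_lt_of_le hkσ with hEq | hLt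
      · -- σ equals the integer k
        right
        refine ⟨1, 0, le_refl 1, le_refl 0, by norm_num, ?_⟩
        have hexpr : ((((1:ℤ)):ℝ) + 1 / 2) ^ 2 - 2 * (((0:ℤ)):ℝ) = (3/2 : ℝ) ^ 2 := by
          norm_num
        rw [hexpr, Real.sqrt_sq (by norm_num : (0:ℝ) ≤ (3/2:ℝ))]
        have hyr : ((2 * y : ℤ) : ℝ) = ((x + k + 3 : ℤ) : ℝ) := by
          exact_mod_cast (by omega : 2 * y = x + k + 3)
        push_cast at hyr
        push_cast
        rw [← hEq] at hyr
        linarith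
      · -- σ < k, so k = 2c - 1 is odd
        have hkodd : k = 2 * c - 1 := by omega
        have hc2 : 2 ≤ c := by
          have h1 : ((2:ℤ):ℝ) ≤ (c:ℝ) := by push_cast; linarith
          exact_mod_cast h1
        obtain ⟨t, ht⟩ : Even (c * (c + 1)) := Int.even_mul_succ_self c
        have hx_eq : x = 2 * y - 2 * c - 2 := by omega
        have h8j : 8 * (t - y) = k ^ 2 - (4 * x + 9) := by
          rw [hkodd, hx_eq]; linear_combination (-4 : ℤ) * ht
        have hklt : (k:ℝ) - 1 < σ := by
          by_contra hcon
          push_neg at hcon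
          have h1 : k ≤ k - 1 := Int.ceil_le.mpr (by push_cast; linarith)
          omega
        have hk2gt : 4 * x + 9 < k ^ 2 := by
          have h1 : (4 * (x:ℝ) + 9) < ((k:ℝ)) ^ 2 := by nlinarith
          exact_mod_cast h1
        have hk2lt : k ^ 2 - (4 * x + 9) < 2 * k - 1 := by
          have h1 : ((k:ℝ) - 1) ^ 2 < 4 * (x:ℝ) + 9 := by nlinarith
          have h2 : ((k - 1 : ℤ) : ℝ) ^ 2 < ((4 * x + 9 : ℤ) : ℝ) := by push_cast; push_cast at h1; linarith
          have h3 : ((k - 1) ^ 2 : ℤ) < 4 * x + 9 := by exact_mod_cast h2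
          nlinarith [h3]
        right
        refine ⟨c - 1, t - y, by omega, by omega, by omega, ?_⟩
        have h8jR : 8 * ((t:ℝ) - (y:ℝ)) = (k:ℝ) ^ 2 - (4 * (x:ℝ) + 9) := by
          exact_mod_cast h8j
        have hkR : (k:ℝ) = 2 * (c:ℝ) - 1 := by exact_mod_cast hkodd
        have hinner : ((((c - 1 : ℤ)):ℝ) + 1 / 2) ^ 2 - 2 * (((t - y : ℤ)):ℝ) = (σ / 2) ^ 2 := by
          push_cast
          push_cast at h8jR
          rw [div_pow, hσ2]
          nlinarith [h8jR, hkR]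
        rw [hinner, Real.sqrt_sq (by positivity)]
        have hxR : (x:ℝ) = 2 * (y:ℝ) - 2 * (c:ℝ) - 2 := by exact_mod_cast hx_eq
        push_cast
        linarith
  · -- reverse direction
    rintro (h | ⟨i, j, hi, hj0, hji, heq⟩)
    · have hk1 : k ≤ 2 * y - x - 4 := by
        apply Int.ceil_le.mpr
        push_cast
        linarith
      have h1 : ((x + 2 * c + 2 : ℤ) : ℝ) ≤ ((2 * y : ℤ) : ℝ) := by
        exact_mod_cast (by omega : x + 2 * c + 2 ≤ 2 * y)
      push_cast at h1
      linarith
    · set b : ℤ := (2 * i + 1) ^ 2 - 8 * j with hbdef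
      have hb0 : (0:ℤ) ≤ b := by nlinarith [sq_nonneg (2 * i - 1), hji, hi]
      have hb0R : (0:ℝ) ≤ ((b:ℤ):ℝ) := by exact_mod_cast hb0
      set τ : ℝ := Real.sqrt ((b:ℤ):ℝ) with hτdef
      have hτ0 : 0 ≤ τ := Real.sqrt_nonneg _
      have hτ2 : τ ^ 2 = ((b:ℤ):ℝ) := Real.sq_sqrt hb0R
      have hbR : ((b:ℤ):ℝ) = (2 * (i:ℝ) + 1) ^ 2 - 8 * (j:ℝ) := by
        rw [hbdef]; push_cast; ring
      have hsq : Real.sqrt (((i:ℝ) + 1 / 2) ^ 2 - 2 * (j:ℝ)) = τ / 2 := by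
        have h1 : ((i:ℝ) + 1 / 2) ^ 2 - 2 * (j:ℝ) = (τ / 2) ^ 2 := by
          rw [div_pow, hτ2, hbR]; ring
        rw [h1, Real.sqrt_sq (by positivity)]
      rw [hsq] at heq
      -- τ = σ + q for the integer q = x + 2i + 4 - 2y
      have hq : τ = σ + ((x + 2 * i + 4 - 2 * y : ℤ) : ℝ) := by push_cast; linarith
      have hiR : (1:ℝ) ≤ (i:ℝ) := by exact_mod_cast hi
      have hjR : (0:ℝ) ≤ (j:ℝ) := by exact_mod_cast hj0
      have hτle : τ ≤ 2 * (i:ℝ) + 1 := by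
        have h2 : τ ^ 2 ≤ (2 * (i:ℝ) + 1) ^ 2 := by rw [hτ2, hbR]; linarith
        nlinarith [h2, hτ0, hiR]
      rcases eq_or_lt_of_le hkσ with hEq | hLt
      · -- σ = k, an odd integer; c = (k+1)/2
        have hk2 : k ^ 2 = 4 * x + 9 := by
          have h1 : ((k:ℤ):ℝ) ^ 2 = ((4 * x + 9 : ℤ):ℝ) := by rw [← hEq]; push_cast; linarith [hσ2]
          exact_mod_cast h1
        obtain ⟨t, ht⟩ | ⟨t, ht⟩ := Int.even_or_odd k
        · exfalso
          have h1 : 4 * (t * t) = 4 * x + 9 := by rw [ht] at hk2; linear_combination hk2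
          obtain ⟨u, hu⟩ : ∃ u : ℤ, u = t * t := ⟨_, rfl⟩
          rw [← hu] at h1
          omega
        · have hcval : c = t + 1 := by
            have harg : σ / 2 + 1 / 2 = (((t + 1 : ℤ)):ℝ) := by
              rw [hEq, ht]; push_cast; ring
            rw [hcdef, harg, Int.ceil_intCast]
          -- need 2y ≥ x + 2c + 2 = x + k + 3
          have hmge : ((x + k + 3 : ℤ):ℝ) ≤ ((2 * y : ℤ):ℝ) := by
            push_cast
            rw [← hEq]
            linarith [heq, hτle]
          have hmge' : x + k + 3 ≤ 2 * y := by exact_mod_cast hmge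
          have hgoal : ((x + 2 * c + 2 : ℤ):ℝ) ≤ ((2 * y : ℤ):ℝ) := by
            exact_mod_cast (by omega : x + 2 * c + 2 ≤ 2 * y)
          push_cast at hgoal
          linarith
      · -- σ < k : σ is irrational
        have hirr : Irrational σ := by
          apply irrational_nrt_of_notint_nrt 2 (4 * x + 9)
          · push_cast; linarith [hσ2]
          · rintro ⟨z, hz⟩
            have h1 : k = z := by rw [hkdef, hz, Int.ceil_intCast]
            rw [hz, ← h1] at hLt
            exact lt_irrefl _ hLt
          · norm_num
        set q : ℤ := x + 2 * i + 4 - 2 * y with hqdef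
        have hq2 : ((2 * q : ℤ):ℝ) * σ = ((b - (4 * x + 9) - q ^ 2 : ℤ):ℝ) := by
          rw [hq] at hτ2
          push_cast
          linear_combination hτ2 - hσ2
        by_cases hq0 : q = 0
        · -- τ = σ, so 2y = x + 2i + 4 and c ≤ i + 1
          have hci : c ≤ i + 1 := by
            apply Int.ceil_le.mpr
            have hστ : σ = τ := by rw [hq, hq0]; push_cast; ring_nf
            push_cast
            rw [hστ]
            linarith
          have h2y : ((2 * y : ℤ):ℝ) = ((x + 2 * i + 4 : ℤ):ℝ) := by
            push_cast
            have hστ : σ = τ := by rw [hq, hq0]; push_cast; ring_nf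
            rw [hστ] at heq
            linarith
          have h2y' : 2 * y = x + 2 * i + 4 := by exact_mod_cast h2y
          have hgoal : ((x + 2 * c + 2 : ℤ):ℝ) ≤ ((2 * y : ℤ):ℝ) := by
            exact_mod_cast (by omega : x + 2 * c + 2 ≤ 2 * y)
          push_cast at hgoal
          linarith
        · exfalso
          have h2q0 : (2 * q : ℤ) ≠ 0 := by omega
          have := hirr.intCast_mul h2q0
          rw [hq2] at this
          exact Int.not_irrational _ this
end

section
/- For every rational r₀ = p/q ∈ [0, 1/2) with p, q nonnegative integers, q > 0, and every n ∈ ℤ with n ≥ 1/q, setting x₁ := nq(nq+1) − 2np − 2 and y₁ := nq(nq+3)/2 − np + 1 gives integers with x₁ ≥ 0 and y₁ − x₁/2 − 3/2 − √(x₁ + 9/4) = nq + 1/2 − √((nq + 1/2)² − 2np), and this value lies in [0, 1/2) and converges to r₀ as n → ∞. -/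
-- rationalization lemma
lemma ratl (u c : ℝ) (hs : 0 ≤ u ^ 2 - c) (hu : 0 < u) :
    u - Real.sqrt (u ^ 2 - c) = c / (u + Real.sqrt (u ^ 2 - c)) := by
  have hv : 0 ≤ Real.sqrt (u ^ 2 - c) := Real.sqrt_nonneg _
  have hsq : Real.sqrt (u ^ 2 - c) ^ 2 = u ^ 2 - c := Real.sq_sqrt hs
  have hpos : 0 < u + Real.sqrt (u ^ 2 - c) := by linarith
  field_simp
  nlinarith [hsq]

theorem stmt_15 (p q : ℤ) (hp : 0 ≤ p) (hq : 0 < q) (hpq : 2 * p < q) :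
    (∀ n : ℤ, 1 ≤ n → ∀ x₁ y₁ : ℤ,
      x₁ = n * q * (n * q + 1) - 2 * n * p - 2 →
      2 * y₁ = n * q * (n * q + 3) - 2 * n * p + 2 →
      0 ≤ x₁ ∧
      ((y₁ : ℝ) - x₁ / 2 - 3 / 2 - Real.sqrt (x₁ + 9 / 4)
        = n * q + 1 / 2 - Real.sqrt ((n * q + 1 / 2) ^ 2 - 2 * n * p)) ∧
      ((n * q + 1 / 2 - Real.sqrt (((n : ℝ) * q + 1 / 2) ^ 2 - 2 * n * p) : ℝ)
        ∈ Set.Ico (0 : ℝ) (1 / 2))) ∧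
    Filter.Tendsto
      (fun n : ℕ => ((n : ℝ) * q + 1 / 2 - Real.sqrt (((n : ℝ) * q + 1 / 2) ^ 2 - 2 * n * p)))
      Filter.atTop (nhds ((p : ℝ) / q)) := by
  have hq1 : (1:ℤ) ≤ q := hq
  constructor
  · intro n hn x₁ y₁ hx hy
    have hnq : (1:ℤ) ≤ n * q := by nlinarith
    have key : (1:ℤ) ≤ n * q - 2 * n * p := by
      nlinarith [mul_le_mul_of_nonneg_left (show (1:ℤ) ≤ q - 2*p by linarith)
        (show (0:ℤ) ≤ n by linarith)]
    have hxR : (x₁:ℝ) = (n:ℝ)*q*((n:ℝ)*q+1) - 2*n*p - 2 := by exact_mod_cast hx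
    have hyR : (2:ℝ)*y₁ = (n:ℝ)*q*((n:ℝ)*q+3) - 2*n*p + 2 := by exact_mod_cast hy
    refine ⟨by nlinarith, ?_, ?_⟩
    · have h1 : ((x₁ : ℝ) + 9 / 4) = ((n:ℝ) * q + 1 / 2) ^ 2 - 2 * n * p := by
        linear_combination hxR
      have h2 : (y₁ : ℝ) - x₁ / 2 - 3 / 2 = (n:ℝ) * q + 1 / 2 := by
        linear_combination hyR/2 - hxR/2
      rw [h1, h2]
    · have hnqR : (1:ℝ) ≤ (n:ℝ) * q := by exact_mod_cast hnq
      have keyR : (1:ℝ) ≤ (n:ℝ) * q - 2 * n * p := by exact_mod_cast key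
      have hnR' : (1:ℝ) ≤ (n:ℝ) := by exact_mod_cast hn
      have hpR' : (0:ℝ) ≤ (p:ℝ) := by exact_mod_cast hp
      have hnp : (0:ℝ) ≤ (n:ℝ)*p := mul_nonneg (by linarith) hpR'
      have hsub : ((n:ℝ) * q) ^ 2 < ((n:ℝ) * q + 1 / 2) ^ 2 - 2 * n * p := by nlinarith
      have hle : ((n:ℝ) * q + 1 / 2) ^ 2 - 2 * n * p ≤ ((n:ℝ) * q + 1 / 2) ^ 2 := by nlinarith
      constructor
      · have := Real.sqrt_le_sqrt hle
        rw [Real.sqrt_sq (by linarith : (0:ℝ) ≤ (n:ℝ) * q + 1/2)] at this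
        linarith
      · have : (n:ℝ) * q < Real.sqrt (((n:ℝ) * q + 1 / 2) ^ 2 - 2 * n * p) := by
          rw [Real.lt_sqrt (by linarith : (0:ℝ) ≤ (n:ℝ)*q)]
          exact hsub
        linarith
  · -- limit part
    set h : ℝ → ℝ := fun t => 2 * p / ((q + t / 2) + Real.sqrt ((q + t / 2) ^ 2 - 2 * p * t)) with hh
    have hqR : (0:ℝ) < (q:ℝ) := by exact_mod_cast hq
    have hval : h 0 = (p:ℝ) / q := by
      simp only [hh]
      rw [show ((q:ℝ) + 0 / 2) ^ 2 - 2 * p * 0 = (q:ℝ)^2 by ring,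
        Real.sqrt_sq hqR.le]
      field_simp
      ring
    have hcont : ContinuousAt h 0 := by
      apply ContinuousAt.div continuousAt_const
      · exact (continuousAt_const.add (continuousAt_id.div_const 2)).add
          ((Real.continuous_sqrt.continuousAt).comp
            (((continuousAt_const.add (continuousAt_id.div_const 2)).pow 2).sub
              (continuousAt_const.mul continuousAt_id)))
      · have : (0:ℝ) < (q + (0:ℝ) / 2) + Real.sqrt ((q + 0/2)^2 - 2*p*0) := by
          have : Real.sqrt (((q:ℝ) + 0/2)^2 - 2*p*0) = q := by
            rw [show ((q:ℝ) + 0 / 2) ^ 2 - 2 * p * 0 = (q:ℝ)^2 by ring, Real.sqrt_sq hqR.le]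
          rw [this]; linarith
        exact ne_of_gt this
    have hinv : Filter.Tendsto (fun n : ℕ => ((n:ℝ))⁻¹) Filter.atTop (nhds 0) :=
      tendsto_inv_atTop_nhds_zero_nat
    have hcomp : Filter.Tendsto (fun n : ℕ => h ((n:ℝ))⁻¹) Filter.atTop (nhds ((p:ℝ)/q)) := by
      rw [← hval]
      exact hcont.tendsto.comp hinv
    apply hcomp.congr'
    filter_upwards [Filter.eventually_ge_atTop 1] with n hn
    have hnR : (1:ℝ) ≤ (n:ℝ) := by exact_mod_cast hn
    have hnpos : (0:ℝ) < (n:ℝ) := by linarith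
    set t : ℝ := ((n:ℝ))⁻¹ with ht
    have htpos : 0 < t := by positivity
    have hnt : (n:ℝ) * t = 1 := mul_inv_cancel₀ (ne_of_gt hnpos)
    have h2pq : (2:ℝ)*p + 1 ≤ q := by exact_mod_cast hpq
    have hpR : (0:ℝ) ≤ (p:ℝ) := by exact_mod_cast hp
    set u : ℝ := (q:ℝ) + t/2 with hu_def
    have hu : 0 < u := by simp only [hu_def]; linarith
    have hs : 0 ≤ u^2 - 2*p*t := by
      simp only [hu_def]; nlinarith [sq_nonneg t, mul_pos htpos htpos]
    have key1 : (n:ℝ) * u = (n:ℝ)*q + 1/2 := by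
      have h' : (n:ℝ)*u = n*q + (n*t)/2 := by simp only [hu_def]; ring
      rw [h', hnt]
    have key2 : (((n:ℝ)*q+1/2)^2 - 2*n*p) = (n:ℝ)^2*(u^2-2*p*t) := by
      have h' : (n:ℝ)^2*(u^2-2*p*t) = (n*u)^2 - 2*p*n*(n*t) := by ring
      rw [h', key1, hnt]; ring
    have hsq : Real.sqrt (((n:ℝ)*q+1/2)^2 - 2*n*p) = n * Real.sqrt (u^2-2*p*t) := by
      rw [key2, Real.sqrt_mul (sq_nonneg _), Real.sqrt_sq hnpos.le]
    have hr := ratl u (2*p*t) hs hu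
    have hvpos : 0 < u + Real.sqrt (u^2-2*p*t) := by
      have := Real.sqrt_nonneg (u^2-2*p*t); linarith
    simp only [hh]
    rw [hsq, ← key1]
    have hrw : (n:ℝ)*u - n*Real.sqrt (u^2-2*p*t)
        = n * (2*p*t/(u + Real.sqrt (u^2-2*p*t))) := by
      rw [← hr]; ring
    rw [hrw]
    rw [show (n:ℝ) * (2*p*t/(u + Real.sqrt (u^2-2*p*t)))
        = (2*p*(n*t))/(u + Real.sqrt (u^2-2*p*t)) by ring, hnt]
    simp only [hu_def, ht]
    ring_nf
end

section
/- If x and y are integers with y − i − 2 = (x + √(4x + 9) − √(4(i² + i − 2j) + 1))/2 for integers i, j, then √(4x+9) − √(4(i²+i−2j)+1) is an integer of the same parity as x, and consequently either 4x + 9 = 4(i² + i − 2j) + 1, or both 4x + 9 and 4(i² + i − 2j) + 1 are perfect squares (of odd integers), forcing x to be even. -/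
theorem stmt_19 (x y i j : ℤ)
    (hx : (0 : ℤ) ≤ 4 * x + 9) (hij : (0 : ℤ) ≤ 4 * (i ^ 2 + i - 2 * j) + 1)
    (h : (y : ℝ) - i - 2
      = ((x : ℝ) + Real.sqrt (4 * x + 9) - Real.sqrt (4 * (i ^ 2 + i - 2 * j) + 1)) / 2) :
    (∃ c : ℤ, (c : ℝ) = Real.sqrt (4 * x + 9) - Real.sqrt (4 * (i ^ 2 + i - 2 * j) + 1) ∧
      c % 2 = x % 2) ∧
    (4 * x + 9 = 4 * (i ^ 2 + i - 2 * j) + 1 ∨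
      ((∃ m : ℤ, Odd m ∧ 4 * x + 9 = m ^ 2) ∧
        (∃ m : ℤ, Odd m ∧ 4 * (i ^ 2 + i - 2 * j) + 1 = m ^ 2))) ∧
    Even x := by
  set a : ℝ := Real.sqrt (4 * x + 9) with ha
  set b : ℝ := Real.sqrt (4 * (i ^ 2 + i - 2 * j) + 1) with hb
  have ha2 : a ^ 2 = 4 * (x : ℝ) + 9 := Real.sq_sqrt (by exact_mod_cast hx)
  have hb2 : b ^ 2 = 4 * ((i : ℝ) ^ 2 + i - 2 * j) + 1 :=
    Real.sq_sqrt (by exact_mod_cast hij)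
  have hc : ((2 * y - 2 * i - 4 - x : ℤ) : ℝ) = a - b := by push_cast; linarith
  have hNeven : Even (i ^ 2 + i - 2 * j) := by
    obtain ⟨k, hk⟩ := Int.even_mul_succ_self i
    exact ⟨k - j, by nlinarith [hk]⟩
  refine ⟨⟨2 * y - 2 * i - 4 - x, hc, by omega⟩, ?_⟩
  set c : ℤ := 2 * y - 2 * i - 4 - x with hcdef
  by_cases hc0 : c = 0
  · have hab : a = b := by rw [hc0] at hc; push_cast at hc; linarith
    have heq : 4 * x + 9 = 4 * (i ^ 2 + i - 2 * j) + 1 := by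
      have : (4 * (x : ℝ) + 9) = 4 * ((i : ℝ) ^ 2 + i - 2 * j) + 1 := by
        rw [← ha2, ← hb2, hab]
      exact_mod_cast this
    refine ⟨Or.inl heq, ?_⟩
    obtain ⟨k, hk⟩ := hNeven
    exact ⟨k - 1, by omega⟩
  · have habc : a = b + (c : ℝ) := by linarith [hc]
    have hbd : ((2 * c : ℤ) : ℝ) * b
        = ((4 * x + 9 - (4 * (i ^ 2 + i - 2 * j) + 1) - c ^ 2 : ℤ) : ℝ) := by
      have key : (b + (c : ℝ)) ^ 2 = 4 * (x : ℝ) + 9 := by rw [← habc]; exact ha2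
      have exp : (b + (c : ℝ)) ^ 2 = b ^ 2 + 2 * (c : ℝ) * b + (c : ℝ) ^ 2 := by ring
      push_cast
      linarith [key, exp, hb2]
    set d : ℤ := 4 * x + 9 - (4 * (i ^ 2 + i - 2 * j) + 1) - c ^ 2 with hd
    have hd2 : d ^ 2 = (2 * c) ^ 2 * (4 * (i ^ 2 + i - 2 * j) + 1) := by
      have : ((d : ℤ) : ℝ) ^ 2
          = ((2 * c : ℤ) : ℝ) ^ 2 * (((4 * (i ^ 2 + i - 2 * j) + 1 : ℤ)) : ℝ) := by
        rw [← hbd]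
        push_cast
        nlinarith [hb2]
      exact_mod_cast this
    have hdvd : (2 * c) ∣ d :=
      (Int.pow_dvd_pow_iff two_ne_zero).mp ⟨4 * (i ^ 2 + i - 2 * j) + 1, hd2⟩
    obtain ⟨m, hm⟩ := hdvd
    have h2c : (2 * c : ℤ) ≠ 0 := by omega
    have hm2 : m ^ 2 = 4 * (i ^ 2 + i - 2 * j) + 1 := by
      have h' : (2 * c) ^ 2 * m ^ 2 = (2 * c) ^ 2 * (4 * (i ^ 2 + i - 2 * j) + 1) := by
        rw [← hd2, hm]; ring
      exact mul_left_cancel₀ (pow_ne_zero 2 h2c) h'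
    have hbm : (m : ℝ) = b := by
      have h2cr : ((2 * c : ℤ) : ℝ) ≠ 0 := by exact_mod_cast h2c
      refine mul_left_cancel₀ h2cr ?_
      rw [hbd, hm]; push_cast; ring
    have hm'2 : (m + c) ^ 2 = 4 * x + 9 := by
      have : (((m + c : ℤ)) : ℝ) ^ 2 = 4 * (x : ℝ) + 9 := by
        push_cast
        rw [hbm, ← habc]
        exact ha2
      exact_mod_cast this
    have hmodd : Odd m := by
      rcases Int.even_or_odd m with he | ho
      · exfalso; obtain ⟨k, hk⟩ := he
        have : m ^ 2 = 4 * k ^ 2 := by rw [hk]; ring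
        omega
      · exact ho
    have hm'odd : Odd (m + c) := by
      rcases Int.even_or_odd (m + c) with he | ho
      · exfalso; obtain ⟨k, hk⟩ := he
        have : (m + c) ^ 2 = 4 * k ^ 2 := by rw [hk]; ring
        omega
      · exact ho
    have hxeven : Even x := by
      obtain ⟨t, ht⟩ := hm'odd
      have hx' : x = t ^ 2 + t - 2 := by nlinarith [hm'2]
      obtain ⟨k, hk⟩ := Int.even_mul_succ_self t
      exact ⟨k - 1, by linear_combination hx' + hk⟩
    exact ⟨Or.inr ⟨⟨m + c, hm'odd, hm'2.symm⟩, ⟨m, hmodd, hm2.symm⟩⟩, hxeven⟩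
end
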